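/- Let Σ be a non-empty signature. The maximal elements of the partially ordered set of canonical partial term graphs over Σ_⊥ under the rigid partial order ≤⊥r are exactly the total canonical term graphs (those containing no ⊥-labelled node). -/

import Mathlib

set_option autoImplicit false

namespace TGR

/-- A signature: a type of symbols, each with a finite arity. -/
structure Signature where
  Sym : Type
  ar : Sym → ℕ

/-- The signature `Σ_⊥`: `Σ` extended by a fresh nullary symbol `⊥` (here `none`). -/
def Signature.bot (S : Signature) : Signature where
  Sym := Option S.Sym
  ar := fun o => match o with
    | none => 0
    | some f => S.ar f

/-- A rooted graph over a signature `S` with nodes `N`: a labelling, a successor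
function respecting arities, and a root node. -/
structure TermGraph (S : Signature) (N : Type) where
  lab : N → S.Sym
  suc : (n : N) → Fin (S.ar (lab n)) → N
  root : N

namespace TermGraph

variable {S : Signature} {N M K : Type}

/-- `g.IsPos π n`: `π` is a position (path of successor indices from the root) of node `n`. -/
inductive IsPos (g : TermGraph S N) : List ℕ → N → Prop
  | root : IsPos g [] g.root
  | step {π : List ℕ} {n : N} (h : IsPos g π n) (i : Fin (S.ar (g.lab n))) :
      IsPos g (π ++ [(i : ℕ)]) (g.suc n i)

/-- All nodes are reachable from the root. -/
def Reachable (g : TermGraph S N) : Prop :=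
  ∀ n : N, ∃ π : List ℕ, g.IsPos π n

/-- The set of positions of `g`. -/
def pos (g : TermGraph S N) : Set (List ℕ) :=
  {π | ∃ n : N, g.IsPos π n}

/-- The set of positions of node `n` in `g`. -/
def nodePos (g : TermGraph S N) (n : N) : Set (List ℕ) :=
  {π | g.IsPos π n}

/-- `π ∼_g π'`: `π` and `π'` are positions of the same node. -/
def Aliases (g : TermGraph S N) (π π' : List ℕ) : Prop :=
  ∃ n : N, g.IsPos π n ∧ g.IsPos π' n

/-- A position is acyclic if it passes no node twice. -/
def IsAcyclicPos (g : TermGraph S N) (π : List ℕ) : Prop :=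
  ∀ (π₁ π₂ : List ℕ) (n : N), π₁ <+: π₂ → π₂ <+: π →
    g.IsPos π₁ n → g.IsPos π₂ n → π₁ = π₂

/-- The set of acyclic positions of node `n` in `g`. -/
def nodePosAcy (g : TermGraph S N) (n : N) : Set (List ℕ) :=
  {π | g.IsPos π n ∧ g.IsAcyclicPos π}

/-- The set of acyclic positions of `g`. -/
def posAcy (g : TermGraph S N) : Set (List ℕ) :=
  {π | (∃ n : N, g.IsPos π n) ∧ g.IsAcyclicPos π}

/-- The depth of a node: the minimal length of its positions. -/
noncomputable def depth (g : TermGraph S N) (n : N) : ℕ :=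
  sInf {k : ℕ | ∃ π : List ℕ, g.IsPos π n ∧ π.length = k}

open Classical in
/-- The (unique) node at a position. -/
noncomputable def nodeAt (g : TermGraph S N) (π : List ℕ) : N :=
  if h : ∃ n : N, g.IsPos π n then h.choose else g.root

/-- The label `g(π)` at a position. -/
noncomputable def labAt (g : TermGraph S N) (π : List ℕ) : S.Sym :=
  g.lab (g.nodeAt π)

/-- `Δ`-homomorphism: root, labelling and successor conditions, the latter two
suspended on `Δ`-labelled nodes. -/
structure IsDHom (Δ : Set S.Sym) (g : TermGraph S N) (h : TermGraph S M)
    (φ : N → M) : Prop where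
  root_eq : φ g.root = h.root
  lab_eq : ∀ n : N, g.lab n ∉ Δ → h.lab (φ n) = g.lab n
  suc_eq : ∀ n : N, g.lab n ∉ Δ → ∀ (i : ℕ) (hi : i < S.ar (g.lab n))
      (hi' : i < S.ar (h.lab (φ n))),
      φ (g.suc n ⟨i, hi⟩) = h.suc (φ n) ⟨i, hi'⟩

/-- Rigidity: `Pa_g(n) = Pa_h(φ n)` for all non-`Δ`-labelled nodes `n`. -/
def IsRigid (Δ : Set S.Sym) (g : TermGraph S N) (h : TermGraph S M)
    (φ : N → M) : Prop :=
  ∀ n : N, g.lab n ∉ Δ → g.nodePosAcy n = h.nodePosAcy (φ n)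

/-- Rigid `Δ`-homomorphism. -/
def IsRigidDHom (Δ : Set S.Sym) (g : TermGraph S N) (h : TermGraph S M)
    (φ : N → M) : Prop :=
  IsDHom Δ g h φ ∧ IsRigid Δ g h φ

/-- Isomorphism of term graphs: a homomorphism with an inverse homomorphism. -/
def Iso (g : TermGraph S N) (h : TermGraph S M) : Prop :=
  ∃ (φ : N → M) (ψ : M → N), IsDHom ∅ g h φ ∧ IsDHom ∅ h g ψ ∧
    (∀ n : N, ψ (φ n) = n) ∧ (∀ m : M, φ (ψ m) = m)

/-- A partial term graph (over `Σ_⊥`) is total if no node is labelled `⊥`. -/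
def Total (g : TermGraph S.bot N) : Prop := ∀ n : N, g.lab n ≠ none

/-- Rigid `⊥`-homomorphism between partial term graphs. -/
def IsRigidBotHom (g : TermGraph S.bot N) (h : TermGraph S.bot M)
    (φ : N → M) : Prop :=
  IsRigidDHom ({none} : Set (Option S.Sym)) g h φ

/-- The `⊥`-depth of a partial term graph: the minimal depth of a `⊥`-labelled
node, `ω` (`⊤`) if there is none. -/
noncomputable def botDepth (g : TermGraph S.bot N) : ℕ∞ :=
  sInf {d : ℕ∞ | ∃ n : N, g.lab n = none ∧ (g.depth n : ℕ∞) = d}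

/-- `m` is an acyclic predecessor of `n`: some acyclic position `π ++ [i]` of `n`
has `π` a position of `m`. -/
def acyPred (g : TermGraph S N) (n : N) : Set N :=
  {m | ∃ (π : List ℕ) (i : ℕ), (π ++ [i]) ∈ g.nodePosAcy n ∧ g.IsPos π m}

/-- Retained nodes of the truncation at depth `d`: the least set of nodes
containing all nodes of depth `< d` and closed under acyclic predecessors. -/
inductive Retained (g : TermGraph S N) (d : ℕ) : N → Prop
  | shallow {n : N} : g.depth n < d → Retained g d n
  | pred {n m : N} : Retained g d n → m ∈ g.acyPred n → Retained g d m

theorem not_retained_zero {g : TermGraph S N} (n : N) : ¬ g.Retained 0 n := by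
  intro h
  induction h with
  | shallow hd => exact Nat.not_lt_zero _ hd
  | pred _ _ ih => exact ih

/-- Fringe nodes of the truncation at depth `d` (a pair `(n, i)` stands for the
fresh node `n^i`); at depth `0` the fringe is just (a copy of) the root. -/
def IsFringe (g : TermGraph S.bot N) (d : ℕ) (p : N × ℕ) : Prop :=
  if d = 0 then p = (g.root, 0)
  else g.Retained d p.1 ∧ ∃ h : p.2 < S.bot.ar (g.lab p.1),
    (¬ g.Retained d (g.suc p.1 ⟨p.2, h⟩) ∨
      (d - 1 ≤ g.depth p.1 ∧ p.1 ∉ g.acyPred (g.suc p.1 ⟨p.2, h⟩)))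

/-- The node set of the rigid truncation: retained nodes plus fringe nodes. -/
def TNode (g : TermGraph S.bot N) (d : ℕ) : Type :=
  {x : N ⊕ (N × ℕ) // Sum.elim (g.Retained d) (g.IsFringe d) x}

def truncLab (g : TermGraph S.bot N) (d : ℕ) (x : TNode g d) : S.bot.Sym :=
  Sum.elim (fun n => g.lab n) (fun _ => none) x.1

open Classical in
noncomputable def truncSuc (g : TermGraph S.bot N) (d : ℕ) :
    (x : TNode g d) → Fin (S.bot.ar (truncLab g d x)) → TNode g d
  | ⟨Sum.inl n, hn⟩ => fun i =>
      if hf : g.IsFringe d (n, (i : ℕ)) then ⟨Sum.inr (n, (i : ℕ)), hf⟩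
      else
        ⟨Sum.inl (g.suc n ⟨(i : ℕ), i.isLt⟩), by
          show g.Retained d (g.suc n ⟨(i : ℕ), i.isLt⟩)
          rcases Nat.eq_zero_or_pos d with hd | hd
          · subst hd
            exact ((not_retained_zero n) hn).elim
          · by_contra hc
            apply hf
            show g.IsFringe d (n, (i : ℕ))
            unfold IsFringe
            rw [if_neg (Nat.pos_iff_ne_zero.mp hd)]
            exact ⟨hn, i.isLt, Or.inl hc⟩⟩
  | ⟨Sum.inr p, hp⟩ => fun i => absurd i.isLt (Nat.not_lt_zero _)

noncomputable def truncRoot (g : TermGraph S.bot N) (d : ℕ) : TNode g d :=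
  if hd : d = 0 then
    ⟨Sum.inr (g.root, 0), by
      subst hd
      show g.IsFringe 0 (g.root, 0)
      simp [IsFringe]⟩
  else
    ⟨Sum.inl g.root, by
      show g.Retained d g.root
      exact Retained.shallow (lt_of_le_of_lt
        (Nat.sInf_le ⟨[], IsPos.root, rfl⟩) (Nat.pos_of_ne_zero hd))⟩

/-- The rigid truncation `g†d` of a partial term graph at finite depth `d`. -/
noncomputable def trunc (g : TermGraph S.bot N) (d : ℕ) :
    TermGraph S.bot (TNode g d) where
  lab := truncLab g d
  suc := truncSuc g d
  root := truncRoot g d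

end TermGraph

/-- A canonical term graph: a term graph whose nodes are sets of positions,
each node being exactly its set of positions, with all nodes reachable. -/
structure CTG (S : Signature) where
  nodes : Set (Set (List ℕ))
  tg : TermGraph S ↥nodes
  reach : tg.Reachable
  canon : ∀ n : ↥nodes, (n : Set (List ℕ)) = tg.nodePos n

namespace CTG

variable {S : Signature}

def pos (g : CTG S) : Set (List ℕ) := g.tg.pos
def Aliases (g : CTG S) : List ℕ → List ℕ → Prop := g.tg.Aliases
def posAcy (g : CTG S) : Set (List ℕ) := g.tg.posAcy
noncomputable def labAt (g : CTG S) : List ℕ → S.Sym := g.tg.labAt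

/-- A canonical partial term graph is total if it has no `⊥`-labelled node. -/
def Total (g : CTG S.bot) : Prop := g.tg.Total

/-- The rigid partial order `g ≤⊥r h`: there is a rigid `⊥`-homomorphism
from `g` to `h`. -/
def LeR (g h : CTG S.bot) : Prop :=
  ∃ φ, TermGraph.IsRigidBotHom g.tg h.tg φ

noncomputable def botDepth (g : CTG S.bot) : ℕ∞ := g.tg.botDepth

/-- `TruncIso g h d`: the rigid truncations of `g` and `h` at depth `d ≤ ω`
are isomorphic (`g†ω = g`). -/
def TruncIso {N M : Type} (g : TermGraph S.bot N) (h : TermGraph S.bot M)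
    (d : ℕ∞) : Prop :=
  (d = ⊤ → TermGraph.Iso g h) ∧
  ∀ k : ℕ, d = (k : ℕ∞) → TermGraph.Iso (g.trunc k) (h.trunc k)

/-- The rigid similarity `sim†(g,h)`: the maximal `d ≤ ω` such that
`g†d ≅ h†d`. -/
noncomputable def simr (g h : CTG S.bot) : ℕ∞ :=
  sSup {d : ℕ∞ | TruncIso g.tg h.tg d}

open Classical in
/-- The rigid distance `d†(g,h) = 2^{-sim†(g,h)}` (with `2^{-ω} = 0`). -/
noncomputable def rdist (g h : CTG S.bot) : ℝ :=
  if simr g h = ⊤ then 0 else (1 / 2 : ℝ) ^ (simr g h).toNat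

def IsUB (A : Set (CTG S.bot)) (u : CTG S.bot) : Prop := ∀ g ∈ A, LeR g u

def IsLubR (A : Set (CTG S.bot)) (u : CTG S.bot) : Prop :=
  IsUB A u ∧ ∀ v, IsUB A v → LeR u v

def IsLB (A : Set (CTG S.bot)) (l : CTG S.bot) : Prop := ∀ g ∈ A, LeR l g

def IsGlbR (A : Set (CTG S.bot)) (l : CTG S.bot) : Prop :=
  IsLB A l ∧ ∀ m, IsLB A m → LeR m l

/-- A directed set: non-empty and every two elements have an upper bound inside. -/
def DirectedR (A : Set (CTG S.bot)) : Prop :=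
  A.Nonempty ∧ ∀ g ∈ A, ∀ h ∈ A, ∃ u ∈ A, LeR g u ∧ LeR h u

/-- `L` is the limit inferior `⨆_{β<α} ⨅_{β≤ι<α} f ι` of the ordinal-indexed
sequence `(f ι)_{ι<α}` in the rigid partial order. -/
def IsLiminfR (α : Ordinal.{0}) (f : Ordinal.{0} → CTG S.bot) (L : CTG S.bot) : Prop :=
  ∃ inf : Ordinal.{0} → CTG S.bot,
    (∀ β < α, IsGlbR {g | ∃ ι, β ≤ ι ∧ ι < α ∧ g = f ι} (inf β)) ∧
    IsLubR {g | ∃ β < α, g = inf β} L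

/-- Cauchy condition for an ordinal-indexed sequence w.r.t. the rigid distance. -/
def OrdCauchy (α : Ordinal.{0}) (f : Ordinal.{0} → CTG S.bot) : Prop :=
  ∀ ε : ℝ, 0 < ε → ∃ β < α, ∀ ι ι' : Ordinal.{0},
    β < ι → ι < ι' → ι' < α → rdist (f ι) (f ι') < ε

/-- Convergence of an ordinal-indexed sequence to `g` w.r.t. the rigid distance. -/
def OrdTendsto (α : Ordinal.{0}) (f : Ordinal.{0} → CTG S.bot) (g : CTG S.bot) : Prop :=
  ∀ ε : ℝ, 0 < ε → ∃ β < α, ∀ ι : Ordinal.{0}, β < ι → ι < α → rdist (f ι) g < ε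

/-- `u` is the unravelling of `g`: the term tree with the same positions and
labels as `g` and trivial aliasing. -/
def IsUnravelling (g u : CTG S) : Prop :=
  u.pos = g.pos ∧ (∀ π ∈ g.pos, u.labAt π = g.labAt π) ∧
  (∀ π π' : List ℕ, u.Aliases π π' ↔ (π ∈ g.pos ∧ π = π'))

end CTG

/-- A labelled quotient tree over a signature `S`. -/
structure LQT (S : Signature) where
  P : Set (List ℕ)
  nonempty : P.Nonempty
  l : List ℕ → S.Sym
  rel : List ℕ → List ℕ → Prop
  rel_refl : ∀ π ∈ P, rel π π
  rel_symm : ∀ π π' : List ℕ, rel π π' → rel π' π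
  rel_trans : ∀ π π' π'' : List ℕ, rel π π' → rel π' π'' → rel π π''
  rel_mem : ∀ π π' : List ℕ, rel π π' → π ∈ P ∧ π' ∈ P
  reach_mem : ∀ (π : List ℕ) (i : ℕ), π ++ [i] ∈ P → π ∈ P
  reach_ar : ∀ (π : List ℕ) (i : ℕ), π ++ [i] ∈ P → i < S.ar (l π)
  congr_lab : ∀ π π' : List ℕ, rel π π' → l π = l π'
  congr_suc : ∀ (π π' : List ℕ) (i : ℕ), rel π π' → i < S.ar (l π) →
    rel (π ++ [i]) (π' ++ [i])

end TGR

/-!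
A rigid `⊥`-homomorphism out of a total term graph is a homomorphism, and rigidity makes it
injective, since every node has an acyclic position. It therefore preserves and reflects
positions, so by canonicity it is the identity on nodes and the target is the graph itself.

Conversely, a `⊥`-node `n₀` of `g` can be relabelled by any `f ∈ Σ` and given fresh
`⊥`-labelled successors. No position of `g` passes through the nullary node `n₀`, so the
inclusion preserves and reflects positions and is rigid; replacing every node of the new graph
by its set of positions gives a canonical term graph strictly above `g`.
-/

namespace TGR

namespace TermGraph

variable {S : Signature} {N M K : Type}

section Positions

variable {g : TermGraph S N}

theorem isPos_nil_iff {n : N} : g.IsPos [] n ↔ n = g.root := by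
  constructor
  · generalize hπ : ([] : List ℕ) = π
    rintro (_ | ⟨_, i⟩)
    · rfl
    · simp at hπ
  · rintro rfl
    exact .root

theorem isPos_append_singleton_iff {π : List ℕ} {i : ℕ} {m : N} :
    g.IsPos (π ++ [i]) m ↔
      ∃ (n : N) (hi : i < S.ar (g.lab n)), g.IsPos π n ∧ m = g.suc n ⟨i, hi⟩ := by
  constructor
  · generalize hρ : π ++ [i] = ρ
    rintro (_ | ⟨h, j⟩)
    · simp at hρ
    · obtain ⟨rfl, hij⟩ := List.append_inj' hρ rfl
      obtain rfl : i = j := by simpa using hij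
      exact ⟨_, j.isLt, h, rfl⟩
  · rintro ⟨n, hi, hπ, rfl⟩
    exact hπ.step ⟨i, hi⟩

theorem IsPos.unique {π : List ℕ} {n m : N} (hn : g.IsPos π n) (hm : g.IsPos π m) :
    n = m := by
  induction hn generalizing m with
  | root => exact (isPos_nil_iff.mp hm).symm
  | step _ i ih =>
    obtain ⟨n', _, hπ, rfl⟩ := isPos_append_singleton_iff.mp hm
    cases ih hπ
    rfl

theorem IsPos.exists_of_prefix {π π' : List ℕ} {n : N} (hπ : g.IsPos π n)
    (hπ' : π' <+: π) : ∃ m, g.IsPos π' m := by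
  induction hπ with
  | root =>
    rw [List.prefix_nil.mp hπ']
    exact ⟨_, .root⟩
  | @step π n h i ih =>
    rcases List.prefix_concat_iff.mp hπ' with rfl | hπ'
    · exact ⟨_, h.step i⟩
    · exact ih hπ'

theorem IsPos.append_of_isPos {π₁ π₂ t : List ℕ} {m n : N} (h₁ : g.IsPos π₁ m)
    (h₂ : g.IsPos π₂ m) (h : g.IsPos (π₂ ++ t) n) : g.IsPos (π₁ ++ t) n := by
  induction t using List.reverseRecOn generalizing n with
  | nil =>
    rw [List.append_nil] at h ⊢
    exact h₂.unique h ▸ h₁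
  | append_singleton t i ih =>
    rw [← List.append_assoc] at h ⊢
    obtain ⟨n', hi, hπ, rfl⟩ := isPos_append_singleton_iff.mp h
    exact (ih hπ).step ⟨i, hi⟩

/-- A shortest position of a node is acyclic: a repeated node could be cut out. -/
theorem IsPos.exists_isAcyclicPos {π : List ℕ} {n : N} (hπ : g.IsPos π n) :
    ∃ ρ, g.IsPos ρ n ∧ g.IsAcyclicPos ρ := by
  induction hlen : π.length using Nat.strong_induction_on generalizing π with
  | _ k ih =>
    by_cases hac : g.IsAcyclicPos π
    · exact ⟨π, hπ, hac⟩
    simp only [IsAcyclicPos, not_forall] at hac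
    obtain ⟨π₁, π₂, m, h12, ⟨t, rfl⟩, hm₁, hm₂, hne⟩ := hac
    have hlt : π₁.length < π₂.length :=
      lt_of_le_of_ne h12.length_le fun h => hne (h12.eq_of_length h)
    exact ih _ (by simp only [List.length_append] at hlen ⊢; omega)
      (hm₁.append_of_isPos hm₂ hπ) rfl

theorem suc_congr {n n' : N} (h : n = n') {i : ℕ} (hi : i < S.ar (g.lab n))
    (hi' : i < S.ar (g.lab n')) : g.suc n ⟨i, hi⟩ = g.suc n' ⟨i, hi'⟩ := by
  subst h
  rfl

theorem labAt_eq_of_isPos {π : List ℕ} {n : N} (hπ : g.IsPos π n) : g.labAt π = g.lab n := by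
  have hex : ∃ m, g.IsPos π m := ⟨n, hπ⟩
  rw [labAt, nodeAt, dif_pos hex, hex.choose_spec.unique hπ]

theorem nodePos_injective (hg : g.Reachable) : Function.Injective g.nodePos := by
  intro n m hnm
  obtain ⟨π, hπ⟩ := hg n
  exact hπ.unique (show π ∈ g.nodePos m from hnm ▸ hπ)

end Positions

section Homomorphisms

variable {Δ : Set S.Sym} {g : TermGraph S N} {h : TermGraph S M} {φ : N → M}

/-- Paths only leave nodes of positive arity, so they never pass through a nullary
suspended label. -/
theorem IsDHom.isPos_map (hφ : IsDHom Δ g h φ) (hΔ : ∀ f ∈ Δ, S.ar f = 0)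
    {π : List ℕ} {n : N} (hπ : g.IsPos π n) : h.IsPos π (φ n) := by
  induction hπ with
  | root => exact hφ.root_eq ▸ .root
  | @step π n _ i ih =>
    have hn : g.lab n ∉ Δ := fun hn => absurd i.isLt (by simp [hΔ _ hn])
    have hi : (i : ℕ) < S.ar (h.lab (φ n)) := by
      rw [hφ.lab_eq n hn]
      exact i.isLt
    rw [hφ.suc_eq n hn i i.isLt hi]
    exact ih.step ⟨i, hi⟩

theorem IsDHom.exists_isPos_of_isPos (hφ : IsDHom Δ g h φ) (hg : ∀ n, g.lab n ∉ Δ)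
    {π : List ℕ} {m : M} (hπ : h.IsPos π m) : ∃ n, φ n = m ∧ g.IsPos π n := by
  induction hπ with
  | root => exact ⟨g.root, hφ.root_eq, .root⟩
  | @step π m _ i ih =>
    obtain ⟨n, rfl, hn⟩ := ih
    have hi : (i : ℕ) < S.ar (g.lab n) := by
      rw [← hφ.lab_eq n (hg n)]
      exact i.isLt
    exact ⟨_, hφ.suc_eq n (hg n) i hi i.isLt, hn.step ⟨i, hi⟩⟩

theorem IsRigidDHom.comp {k : TermGraph S K} {ψ : M → K} (hψ : IsRigidDHom Δ h k ψ)
    (hφ : IsRigidDHom Δ g h φ) : IsRigidDHom Δ g k (ψ ∘ φ) := by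
  obtain ⟨⟨hφr, hφl, hφs⟩, hφrig⟩ := hφ
  obtain ⟨⟨hψr, hψl, hψs⟩, hψrig⟩ := hψ
  have hlab : ∀ n, g.lab n ∉ Δ → h.lab (φ n) ∉ Δ := fun n hn => hφl n hn ▸ hn
  refine ⟨⟨by simp [hφr, hψr], fun n hn => (hψl _ (hlab n hn)).trans (hφl n hn), ?_⟩,
    fun n hn => (hφrig n hn).trans (hψrig _ (hlab n hn))⟩
  intro n hn i hi hi'
  have hi'' : i < S.ar (h.lab (φ n)) := hφl n hn ▸ hi
  simp only [Function.comp_apply, hφs n hn i hi hi'', hψs _ (hlab n hn) i hi'' hi']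

/-- Every prefix of a position of `g` is a position of some node of `g`, so acyclicity is
checked on the same nodes in `g` and in `h`. -/
theorem isRigid_of_isPos_iff (hφ : ∀ π n, h.IsPos π (φ n) ↔ g.IsPos π n) :
    IsRigid Δ g h φ := by
  intro n _
  ext π
  refine ⟨fun ⟨hπ, hacy⟩ => ⟨(hφ π n).mpr hπ, ?_⟩, fun ⟨hπ, hacy⟩ => ⟨(hφ π n).mp hπ, ?_⟩⟩
  · intro π₁ π₂ x h12 h2 hx₁ hx₂
    obtain ⟨m, hm⟩ := hπ.exists_of_prefix h2
    obtain rfl : x = φ m := hx₂.unique ((hφ _ _).mpr hm)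
    exact hacy π₁ π₂ m h12 h2 ((hφ _ _).mp hx₁) hm
  · intro π₁ π₂ x h12 h2 hx₁ hx₂
    exact hacy π₁ π₂ (φ x) h12 h2 ((hφ _ _).mpr hx₁) ((hφ _ _).mpr hx₂)

end Homomorphisms

section Transfer

variable (g : TermGraph S N) (e : N ≃ M)

def transfer : TermGraph S M where
  lab m := g.lab (e.symm m)
  suc m i := e (g.suc (e.symm m) i)
  root := e g.root

variable {g e}

theorem isPos_transfer {π : List ℕ} {n : N} (hπ : g.IsPos π n) :
    (g.transfer e).IsPos π (e n) := by
  induction hπ with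
  | root => exact .root
  | @step π n _ i ih =>
    have hi : (i : ℕ) < S.ar ((g.transfer e).lab (e n)) := by
      simp only [transfer, Equiv.symm_apply_apply]
      exact i.isLt
    have hsuc : (g.transfer e).suc (e n) ⟨i, hi⟩ = e (g.suc n i) :=
      congrArg e (suc_congr (e.symm_apply_apply n) _ _)
    exact hsuc ▸ ih.step ⟨i, hi⟩

theorem isPos_transfer_iff {π : List ℕ} {n : N} :
    (g.transfer e).IsPos π (e n) ↔ g.IsPos π n := by
  refine ⟨fun hπ => ?_, isPos_transfer⟩
  suffices ∀ m, (g.transfer e).IsPos π m → g.IsPos π (e.symm m) by simpa using this _ hπ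
  clear hπ
  intro m hπ
  induction hπ with
  | root => simpa [transfer] using IsPos.root
  | step _ i ih => simpa [transfer] using ih.step i

theorem isDHom_transfer (Δ : Set S.Sym) : IsDHom Δ g (g.transfer e) e where
  root_eq := rfl
  lab_eq n _ := by simp [transfer]
  suc_eq n _ _ _ _ := congrArg e (suc_congr (e.symm_apply_apply n).symm _ _)

end Transfer

section Expand

variable (g : TermGraph S.bot N) (n₀ : N) (f : S.Sym)

open Classical in
/-- Relabel `n₀` by `f` and give it `ar f` fresh `⊥`-labelled successors `Sum.inr i`. -/
noncomputable def expand : TermGraph S.bot (N ⊕ Fin (S.ar f)) where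
  lab := Sum.elim (fun n => if n = n₀ then some f else g.lab n) fun _ => none
  suc
    | .inl n, i =>
      if h : n = n₀ then .inr (i.cast (by subst h; exact congrArg S.bot.ar (if_pos rfl)))
      else .inl (g.suc n (i.cast (congrArg S.bot.ar (if_neg h))))
    | .inr _, i => absurd i.isLt (Nat.not_lt_zero _)
  root := .inl g.root

variable {g n₀ f}

theorem expand_lab_inl_self : (g.expand n₀ f).lab (.inl n₀) = some f :=
  if_pos rfl

theorem expand_lab_inl_of_ne {n : N} (hn : n ≠ n₀) : (g.expand n₀ f).lab (.inl n) = g.lab n :=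
  if_neg hn

theorem expand_suc_inl_self {i : ℕ} (hi : i < S.bot.ar ((g.expand n₀ f).lab (.inl n₀)))
    (hi' : i < S.ar f) : (g.expand n₀ f).suc (.inl n₀) ⟨i, hi⟩ = .inr ⟨i, hi'⟩ :=
  dif_pos rfl

theorem expand_suc_inl_of_ne {n : N} (hn : n ≠ n₀) {i : ℕ}
    (hi : i < S.bot.ar ((g.expand n₀ f).lab (.inl n))) (hi' : i < S.bot.ar (g.lab n)) :
    (g.expand n₀ f).suc (.inl n) ⟨i, hi⟩ = .inl (g.suc n ⟨i, hi'⟩) :=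
  dif_neg hn

variable (hn₀ : g.lab n₀ = none)
include hn₀

theorem isPos_expand_inl {π : List ℕ} {n : N} (hπ : g.IsPos π n) :
    (g.expand n₀ f).IsPos π (.inl n) := by
  induction hπ with
  | root => exact .root
  | @step π n _ i ih =>
    have hn : n ≠ n₀ := by
      rintro rfl
      exact absurd i.isLt (by simp [hn₀, Signature.bot])
    have hi : (i : ℕ) < S.bot.ar ((g.expand n₀ f).lab (.inl n)) := by
      rw [expand_lab_inl_of_ne hn]
      exact i.isLt
    exact expand_suc_inl_of_ne hn hi i.isLt ▸ ih.step ⟨i, hi⟩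

theorem isPos_expand_inl_iff {π : List ℕ} {n : N} :
    (g.expand n₀ f).IsPos π (.inl n) ↔ g.IsPos π n := by
  refine ⟨fun hπ => ?_, isPos_expand_inl hn₀⟩
  generalize hx : (Sum.inl n : N ⊕ Fin (S.ar f)) = x at hπ
  induction hπ generalizing n with
  | root => exact Sum.inl_injective hx ▸ .root
  | @step π x _ i ih =>
    rcases x with m | j
    · by_cases hm : m = n₀
      · subst hm
        have hi : (i : ℕ) < S.ar f :=
          lt_of_lt_of_eq i.isLt (congrArg S.bot.ar expand_lab_inl_self)
        simp [expand_suc_inl_self i.isLt hi] at hx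
      · have hi : (i : ℕ) < S.bot.ar (g.lab m) := by
          simpa [expand_lab_inl_of_ne hm] using i.isLt
        rw [expand_suc_inl_of_ne hm i.isLt hi, Sum.inl_injective.eq_iff] at hx
        exact hx ▸ (ih rfl).step ⟨i, hi⟩
    · exact absurd i.isLt (Nat.not_lt_zero _)

theorem isPos_expand_inr {π : List ℕ} (hπ : g.IsPos π n₀) (i : Fin (S.ar f)) :
    (g.expand n₀ f).IsPos (π ++ [(i : ℕ)]) (.inr i) := by
  have hi : (i : ℕ) < S.bot.ar ((g.expand n₀ f).lab (.inl n₀)) := by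
    rw [expand_lab_inl_self]
    exact i.isLt
  exact expand_suc_inl_self hi i.isLt ▸ (isPos_expand_inl hn₀ hπ).step ⟨i, hi⟩

theorem reachable_expand (hg : g.Reachable) : (g.expand n₀ f).Reachable := by
  rintro (n | i)
  · obtain ⟨π, hπ⟩ := hg n
    exact ⟨π, isPos_expand_inl hn₀ hπ⟩
  · obtain ⟨π, hπ⟩ := hg n₀
    exact ⟨_, isPos_expand_inr hn₀ hπ i⟩

theorem isRigidBotHom_inl_expand : IsRigidBotHom g (g.expand n₀ f) Sum.inl := by
  have hne : ∀ n, g.lab n ∉ ({none} : Set S.bot.Sym) → n ≠ n₀ := fun n hn h => hn (h ▸ hn₀)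
  refine ⟨⟨rfl, fun n hn => expand_lab_inl_of_ne (hne n hn),
    fun n hn i hi hi' => (expand_suc_inl_of_ne (hne n hn) hi' hi).symm⟩,
    isRigid_of_isPos_iff fun _ _ => isPos_expand_inl_iff hn₀⟩

end Expand

end TermGraph

namespace CTG

open TermGraph

variable {S : Signature} {N : Type}

noncomputable def ofReachable (t : TermGraph S N) (ht : t.Reachable) : CTG S where
  nodes := Set.range t.nodePos
  tg := t.transfer (Equiv.ofInjective _ (nodePos_injective ht))
  reach m := by
    obtain ⟨n, rfl⟩ := (Equiv.ofInjective _ (nodePos_injective ht)).surjective m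
    obtain ⟨π, hπ⟩ := ht n
    exact ⟨π, isPos_transfer hπ⟩
  canon m := by
    obtain ⟨n, rfl⟩ := (Equiv.ofInjective _ (nodePos_injective ht)).surjective m
    ext π
    rw [Equiv.ofInjective_apply]
    exact isPos_transfer_iff.symm

theorem isRigidDHom_ofReachable (Δ : Set S.Sym) (t : TermGraph S N) (ht : t.Reachable) :
    IsRigidDHom Δ t (ofReachable t ht).tg (Equiv.ofInjective _ (nodePos_injective ht)) :=
  ⟨isDHom_transfer Δ, isRigid_of_isPos_iff fun _ _ => isPos_transfer_iff⟩

theorem eq_of_isDHom {Δ : Set S.Sym} {g h : CTG S} {φ : g.nodes → h.nodes}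
    (hφ : IsDHom Δ g.tg h.tg φ) (hg : ∀ n, g.tg.lab n ∉ Δ)
    (hcoe : ∀ n, (φ n : Set (List ℕ)) = n) : g = h := by
  obtain ⟨gN, gt, _, _⟩ := g
  obtain ⟨hN, ht, hreach, _⟩ := h
  obtain rfl : gN = hN := by
    ext x
    constructor
    · intro hx
      have := (φ ⟨x, hx⟩).2
      rwa [hcoe] at this
    · intro hx
      obtain ⟨π, hπ⟩ := hreach ⟨x, hx⟩
      obtain ⟨n, hn, -⟩ := hφ.exists_isPos_of_isPos hg hπ
      have := n.2
      rwa [← hcoe n, hn] at this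
  obtain rfl : φ = id := funext fun n => Subtype.ext (hcoe n)
  obtain ⟨lab, suc, root⟩ := gt
  obtain ⟨lab', suc', root'⟩ := ht
  obtain rfl : lab' = lab := funext fun n => hφ.lab_eq n (hg n)
  obtain rfl : root = root' := hφ.root_eq
  obtain rfl : suc = suc' := funext fun n => funext fun i => hφ.suc_eq n (hg n) i i.2 i.2
  rfl

theorem eq_of_leR_of_total {g h : CTG S.bot} (hg : g.Total) (hle : LeR g h) : g = h := by
  obtain ⟨φ, hφ, hrig⟩ := hle
  have hg' : ∀ n, g.tg.lab n ∉ ({none} : Set S.bot.Sym) := hg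
  have hinj : Function.Injective φ := by
    intro a b hab
    obtain ⟨π₀, hπ₀⟩ := g.reach a
    obtain ⟨π, hπ, hacy⟩ := hπ₀.exists_isAcyclicPos
    have hb : π ∈ g.tg.nodePosAcy b := by
      rw [hrig b (hg' b), ← hab, ← hrig a (hg' a)]
      exact ⟨hπ, hacy⟩
    exact hπ.unique hb.1
  have hpos : ∀ π n, h.tg.IsPos π (φ n) ↔ g.tg.IsPos π n := by
    refine fun π n => ⟨fun hπ => ?_, hφ.isPos_map (by rintro _ rfl; rfl)⟩
    obtain ⟨n', hn', hπ'⟩ := hφ.exists_isPos_of_isPos hg' hπ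
    exact hinj hn' ▸ hπ'
  exact eq_of_isDHom hφ hg' fun n =>
    (h.canon (φ n)).trans ((Set.ext fun π => hpos π n).trans (g.canon n).symm)

theorem exists_leR_ne_of_lab_eq_none (g : CTG S.bot) {n₀ : g.nodes}
    (hn₀ : g.tg.lab n₀ = none) (f : S.Sym) : ∃ h, LeR g h ∧ g ≠ h := by
  have ht := reachable_expand (f := f) hn₀ g.reach
  obtain ⟨hφ, hrig⟩ := (isRigidDHom_ofReachable _ _ ht).comp (isRigidBotHom_inl_expand hn₀)
  refine ⟨ofReachable _ ht, ⟨_, hφ, hrig⟩, fun heq => ?_⟩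
  obtain ⟨π, hπ⟩ := g.reach n₀
  have hbot : g.labAt π = none := (labAt_eq_of_isPos hπ).trans hn₀
  have hf : (ofReachable _ ht).labAt π = some f :=
    (labAt_eq_of_isPos (hφ.isPos_map (by rintro _ rfl; rfl) hπ)).trans
      (((isRigidDHom_ofReachable ∅ _ ht).1.lab_eq _ (Set.notMem_empty _)).trans
        expand_lab_inl_self)
  rw [← heq, hbot] at hf
  exact Option.some_ne_none f hf.symm

end CTG

/-- For a non-empty signature `Σ`, the maximal elements of the
canonical partial term graphs under the rigid partial order `≤⊥r` are exactly
the total canonical term graphs. -/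
theorem maximal_iff_total (S : Signature) (hS : Nonempty S.Sym) (g : CTG S.bot) :
    (∀ h : CTG S.bot, CTG.LeR g h → g = h) ↔ g.Total := by
  refine ⟨fun hmax n₀ hn₀ => ?_, fun hg h hle => CTG.eq_of_leR_of_total hg hle⟩
  obtain ⟨h, hle, hne⟩ := g.exists_leR_ne_of_lab_eq_none hn₀ hS.some
  exact hne (hmax h hle)

end TGR
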